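/- arXiv:1711.04184 — 8 statements merged into one kernel-verified Lean document; each statement's English description precedes it below -/
import Mathlib

section
/- Let a < b be real numbers and let f : [a,b] → ℝ. Suppose that for every ε > 0 there exist finitely many closed intervals I₁, …, Iₙ, each contained in [a,b], such that [a,b] = I₁ ∪ … ∪ Iₙ and for each i and all x, y ∈ Iᵢ one has |f(x) − f(y)| ≤ ε. Then f is continuous on [a,b]. -/
/-- Continuity of s-IAC functions: if for every `ε > 0` the interval `[a,b]` can be
written as a finite union of closed subintervals on each of which the oscillation of
`f` is at most `ε`, then `f` is continuous on `[a,b]`. -/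
theorem sIAC_continuous (a b : ℝ) (hab : a < b) (f : ℝ → ℝ)
    (h : ∀ ε : ℝ, 0 < ε → ∃ (n : ℕ) (l r : Fin n → ℝ),
      (∀ i, Set.Icc (l i) (r i) ⊆ Set.Icc a b) ∧
      Set.Icc a b = ⋃ i, Set.Icc (l i) (r i) ∧
      ∀ i, ∀ x ∈ Set.Icc (l i) (r i), ∀ y ∈ Set.Icc (l i) (r i), |f x - f y| ≤ ε) :
    ContinuousOn f (Set.Icc a b) := by
  intro x hx
  rw [Metric.continuousWithinAt_iff]
  intro ε hε
  obtain ⟨n, l, r, hsub, hcov, hosc⟩ := h (ε / 2) (by linarith)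
  -- intervals not containing x
  set g : Fin n → Set ℝ := fun i =>
    if x ∈ Set.Icc (l i) (r i) then (∅ : Set ℝ) else Set.Icc (l i) (r i) with hg
  have hgclosed : IsClosed (⋃ i, g i) := by
    apply isClosed_iUnion_of_finite
    intro i
    simp only [hg]
    split_ifs
    exacts [isClosed_empty, isClosed_Icc]
  have hxnot : x ∉ ⋃ i, g i := by
    simp only [Set.mem_iUnion, not_exists]
    intro i hxi
    simp only [hg] at hxi
    split_ifs at hxi with hmem
    · exact hxi
    · exact hmem hxi
  have hopen : IsOpen (⋃ i, g i)ᶜ := hgclosed.isOpen_compl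
  obtain ⟨δ, hδ, hball⟩ := Metric.isOpen_iff.mp hopen x hxnot
  refine ⟨δ, hδ, fun y hy hyd => ?_⟩
  have hyU : y ∈ ⋃ i, Set.Icc (l i) (r i) := hcov ▸ hy
  obtain ⟨i, hyi⟩ := Set.mem_iUnion.mp hyU
  have hxi : x ∈ Set.Icc (l i) (r i) := by
    by_contra hxi
    have : y ∈ ⋃ i, g i := Set.mem_iUnion.mpr ⟨i, by simp only [hg]; rw [if_neg hxi]; exact hyi⟩
    exact (hball hyd) this
  have := hosc i y hyi x hxi
  rw [Real.dist_eq]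
  linarith [this]
end

section
/- Let a < b be real numbers, let ε > 0, and let f : [a,b] → ℝ. Suppose [a,b] = I₁ ∪ … ∪ Iₙ where each Iᵢ = [lᵢ, rᵢ] is a closed interval contained in [a,b] with lᵢ < rᵢ, and for each i and all u, v ∈ Iᵢ one has |f(u) − f(v)| ≤ ε. Let δ = min_{i=1,…,n} (rᵢ − lᵢ). Then for all x, y ∈ [a,b] with |x − y| ≤ δ one has |f(x) − f(y)| ≤ 2ε. -/
/-- Uniform modulus of continuity for ε-s-IAC functions: if `[a,b]` is a finite union
of nondegenerate closed subintervals on each of which the oscillation of `f` is at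
most `ε`, and `δ` is the minimal diameter of the covering intervals, then any two
points of `[a,b]` at distance at most `δ` have `f`-values at distance at most `2ε`. -/
theorem epsIAC_uniform_modulus (a b : ℝ) (hab : a < b) (ε : ℝ) (hε : 0 < ε)
    (f : ℝ → ℝ) (n : ℕ) (hn : 0 < n) (l r : Fin n → ℝ)
    (hlr : ∀ i, l i < r i)
    (hsub : ∀ i, Set.Icc (l i) (r i) ⊆ Set.Icc a b)
    (hcov : Set.Icc a b = ⋃ i, Set.Icc (l i) (r i))
    (hosc : ∀ i, ∀ u ∈ Set.Icc (l i) (r i), ∀ v ∈ Set.Icc (l i) (r i),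
      |f u - f v| ≤ ε) :
    ∀ x ∈ Set.Icc a b, ∀ y ∈ Set.Icc a b,
      |x - y| ≤ (⨅ i, (r i - l i)) → |f x - f y| ≤ 2 * ε := by
  have hbdd : BddBelow (Set.range fun i => r i - l i) :=
    (Set.finite_range _).bddBelow
  have hδ : ∀ k, (⨅ i, (r i - l i)) ≤ r k - l k := fun k => ciInf_le hbdd k
  have mem_some : ∀ z ∈ Set.Icc a b, ∃ i, z ∈ Set.Icc (l i) (r i) := by
    intro z hz
    rw [hcov] at hz
    simpa using hz
  have key : ∀ x ∈ Set.Icc a b, ∀ y ∈ Set.Icc a b, x ≤ y →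
      y - x ≤ (⨅ i, (r i - l i)) → |f x - f y| ≤ 2 * ε := by
    intro x hx y hy hxy hd
    obtain ⟨i0, hi0⟩ := mem_some x hx
    obtain ⟨j0, hj0⟩ := mem_some y hy
    obtain ⟨i, hiS, hi⟩ := Finset.exists_max_image
      (Finset.univ.filter fun k => x ∈ Set.Icc (l k) (r k)) r
      ⟨i0, by simpa using hi0⟩
    obtain ⟨j, hjS, hj⟩ := Finset.exists_min_image
      (Finset.univ.filter fun k => y ∈ Set.Icc (l k) (r k)) l
      ⟨j0, by simpa using hj0⟩
    simp only [Finset.mem_filter, Finset.mem_univ, true_and] at hiS hjS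
    by_cases h1 : y ≤ r i
    · have := hosc i x hiS y ⟨le_trans hiS.1 hxy, h1⟩
      linarith [hε]
    by_cases h2 : l j ≤ x
    · have := hosc j x ⟨h2, le_trans hxy hjS.2⟩ y hjS
      linarith [hε]
    push_neg at h1 h2
    -- Now r i < y and x < l j. Show l j ≤ r i.
    have hji : l j ≤ r i := by
      by_contra h
      push_neg at h
      set t := (r i + l j) / 2 with ht
      have ht1 : r i < t := by simp only [ht]; linarith
      have ht2 : t < l j := by simp only [ht]; linarith
      have htab : t ∈ Set.Icc a b := by
        constructor
        · linarith [hx.1, hiS.1, hiS.2]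
        · linarith [hy.2, hjS.1, hjS.2]
      obtain ⟨k, hk⟩ := mem_some t htab
      have hxk : x < l k := by
        by_contra hc
        push_neg at hc
        have hxmem : x ∈ Set.Icc (l k) (r k) :=
          ⟨hc, le_trans hiS.2 (le_trans (le_of_lt ht1) hk.2)⟩
        have := hi k (by simpa using hxmem)
        linarith [hk.2]
      have hyk : r k < y := by
        by_contra hc
        push_neg at hc
        have hymem : y ∈ Set.Icc (l k) (r k) :=
          ⟨by linarith [hk.1, hjS.1, ht2], hc⟩
        have := hj k (by simpa using hymem)
        linarith [hk.1]
      have := hδ k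
      linarith
    -- intermediate point z = l j
    have hz1 : l j ∈ Set.Icc (l i) (r i) := ⟨le_trans hiS.1 (le_of_lt h2), hji⟩
    have hz2 : l j ∈ Set.Icc (l j) (r j) := ⟨le_refl _, le_of_lt (hlr j)⟩
    have e1 := hosc i x hiS (l j) hz1
    have e2 := hosc j (l j) hz2 y hjS
    calc |f x - f y| ≤ |f x - f (l j)| + |f (l j) - f y| := abs_sub_le _ _ _
      _ ≤ 2 * ε := by linarith
  intro x hx y hy hxyd
  rcases le_total x y with h | h
  · exact key x hx y hy h (by rw [abs_sub_comm] at hxyd; linarith [le_abs_self (y - x)])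
  · rw [abs_sub_comm]
    exact key y hy x hx h (by linarith [le_abs_self (x - y)])
end

section
/- Let R ⊆ ℝ be any set (the set of representable numbers), let D ⊆ ℝ, and let f : D → ℝ. Suppose that for every ε > 0 and every x ∈ D there exist α, β ∈ R with α ≤ x ≤ β, [α, β] ⊆ D, and |f(y) − f(z)| ≤ ε for all y, z ∈ [α, β]. Then f is continuous (as a function on D) at every point x ∈ D \ R. -/
/-! A non-representable point of an interval with representable endpoints is not an endpoint,
so it lies in the interior. The interval is then a neighbourhood of the point on which `f`
oscillates by at most `ε`; hence `f` is even continuous at the point, not only within `D`. -/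

open Filter Set Topology

theorem Icc_mem_nhds_of_notMem {X : Type*} [LinearOrder X] [TopologicalSpace X]
    [OrderTopology X] {R : Set X} {a b x : X} (ha : a ∈ R) (hb : b ∈ R)
    (hx : x ∈ Icc a b) (hxR : x ∉ R) : Icc a b ∈ 𝓝 x :=
  have hax : a ≠ x := fun h => hxR (h ▸ ha)
  have hxb : x ≠ b := fun h => hxR (h ▸ hb)
  Icc_mem_nhds (hx.1.lt_of_ne hax) (hx.2.lt_of_ne hxb)

theorem continuousAt_of_forall_exists_mem_nhds_dist_le {X Y : Type*} [TopologicalSpace X]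
    [PseudoMetricSpace Y] {f : X → Y} {x : X}
    (h : ∀ ε > 0, ∃ U ∈ 𝓝 x, ∀ y ∈ U, ∀ z ∈ U, dist (f y) (f z) ≤ ε) :
    ContinuousAt f x := by
  refine Metric.tendsto_nhds.2 fun ε hε => ?_
  obtain ⟨U, hU, hosc⟩ := h (ε / 2) (half_pos hε)
  filter_upwards [hU] with y hy
  exact (hosc y hy x (mem_of_mem_nhds hU)).trans_lt (half_lt_self hε)

/-- A w-IAC function is continuous at every non-representable point: if every point of the
domain `D` lies, for each `ε > 0`, in a closed interval with endpoints in `R`, contained in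
`D`, on which the oscillation of `f` is at most `ε`, then `f` is continuous (within `D`)
at every point of `D \ R`. -/
theorem wIAC_continuous_at_nonrepresentable (R D : Set ℝ) (f : ℝ → ℝ)
    (h : ∀ ε : ℝ, 0 < ε → ∀ x ∈ D, ∃ α β : ℝ, α ∈ R ∧ β ∈ R ∧
      α ≤ x ∧ x ≤ β ∧ Set.Icc α β ⊆ D ∧
      ∀ y ∈ Set.Icc α β, ∀ z ∈ Set.Icc α β, |f y - f z| ≤ ε) :
    ∀ x ∈ D \ R, ContinuousWithinAt f D x := by
  rintro x ⟨hxD, hxR⟩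
  refine (continuousAt_of_forall_exists_mem_nhds_dist_le fun ε hε => ?_).continuousWithinAt
  obtain ⟨α, β, hα, hβ, hαx, hxβ, -, hosc⟩ := h ε hε x hxD
  refine ⟨Icc α β, Icc_mem_nhds_of_notMem hα hβ ⟨hαx, hxβ⟩ hxR, fun y hy z hz => ?_⟩
  rw [Real.dist_eq]
  exact hosc y hy z hz
end

section
/- (Interval Newton, existence and uniqueness) Let a < b and let f : ℝ → ℝ be continuously differentiable on [a,b]. Suppose there are real numbers m ≤ M with 0 ∉ [m, M] and f′(x) ∈ [m, M] for all x ∈ [a,b]. Let x₀ ∈ [a,b] and define N(x₀, [a,b]) = { x₀ − f(x₀)/d : d ∈ [m, M] }. If N(x₀, [a,b]) ⊆ [a,b], then there exists a unique x* ∈ [a,b] with f(x*) = 0. -/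
/-- Interval Newton method (Moore), part 2: existence and uniqueness. If the interval
Newton operator `N(x₀,[a,b]) = {x₀ - f(x₀)/d : d ∈ [m,M]}` maps into `[a,b]`, then `f`
has a unique zero in `[a,b]`. -/
theorem interval_newton_exists_unique (a b : ℝ) (hab : a < b) (f f' : ℝ → ℝ)
    (hderiv : ∀ x ∈ Set.Icc a b, HasDerivWithinAt f (f' x) (Set.Icc a b) x)
    (hcont : ContinuousOn f' (Set.Icc a b))
    (m M : ℝ) (hmM : m ≤ M) (h0 : (0 : ℝ) ∉ Set.Icc m M)
    (hbound : ∀ x ∈ Set.Icc a b, f' x ∈ Set.Icc m M)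
    (x₀ : ℝ) (hx₀ : x₀ ∈ Set.Icc a b)
    (hN : {x : ℝ | ∃ d ∈ Set.Icc m M, x = x₀ - f x₀ / d} ⊆ Set.Icc a b) :
    ∃! x : ℝ, x ∈ Set.Icc a b ∧ f x = 0 := by
  have hcf : ContinuousOn f (Set.Icc a b) := fun x hx => (hderiv x hx).continuousWithinAt
  -- mean value theorem on subintervals
  have mvt : ∀ x ∈ Set.Icc a b, ∀ y ∈ Set.Icc a b, x < y →
      ∃ ξ ∈ Set.Ioo x y, f y - f x = f' ξ * (y - x) := by
    intro x hx y hy hxy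
    have hsub : Set.Icc x y ⊆ Set.Icc a b := Set.Icc_subset_Icc hx.1 hy.2
    have hd : ∀ z ∈ Set.Ioo x y, HasDerivAt f (f' z) z := by
      intro z hz
      have hz' : z ∈ Set.Ioo a b := ⟨lt_of_le_of_lt hx.1 hz.1, lt_of_lt_of_le hz.2 hy.2⟩
      exact (hderiv z (Set.mem_Icc.mpr ⟨hz'.1.le, hz'.2.le⟩)).hasDerivAt
        (Icc_mem_nhds hz'.1 hz'.2)
    obtain ⟨ξ, hξ, he⟩ := exists_hasDerivAt_eq_slope f f' hxy (hcf.mono hsub) hd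
    refine ⟨ξ, hξ, ?_⟩
    have hne : y - x ≠ 0 := sub_ne_zero.mpr hxy.ne'
    field_simp at he
    linarith [he]
  -- case split on sign of the interval
  have hcase : 0 < m ∨ M < 0 := by
    rcases lt_or_ge 0 m with h | h
    · exact Or.inl h
    rcases lt_or_ge M 0 with h' | h'
    · exact Or.inr h'
    · exact absurd ⟨h, h'⟩ h0
  -- choose endpoint d
  set d : ℝ := if 0 < m then m else M with hd_def
  have hdI : d ∈ Set.Icc m M := by
    by_cases h : 0 < m <;> simp [hd_def, h, hmM, le_refl]
  have hdne : d ≠ 0 := by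
    rcases hcase with h | h
    · simp [hd_def, h]; exact h.ne'
    · have hm : ¬ 0 < m := fun hm => absurd (hm.trans_le hmM) (asymm h)
      simp [hd_def, hm]; exact h.ne
  -- the Newton point
  set x₁ : ℝ := x₀ - f x₀ / d with hx₁_def
  have hx₁ : x₁ ∈ Set.Icc a b := hN ⟨d, hdI, rfl⟩
  -- key: 1 ≤ f' ξ / d for ξ ∈ Icc a b
  have hkey : ∀ ξ ∈ Set.Icc a b, 1 ≤ f' ξ / d := by
    intro ξ hξ
    obtain ⟨hm', hM'⟩ := hbound ξ hξ
    rcases hcase with h | h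
    · have : d = m := by simp [hd_def, h]
      rw [this, le_div_iff₀ h]; linarith
    · have hm : ¬ 0 < m := fun hm => absurd (hm.trans_le hmM) (asymm h)
      have : d = M := by simp [hd_def, hm]
      rw [this, le_div_iff_of_neg h]; linarith
  -- existence of a zero
  have hex : ∃ c ∈ Set.Icc a b, f c = 0 := by
    by_cases h0' : f x₀ = 0
    · exact ⟨x₀, hx₀, h0'⟩
    · have hne : x₁ ≠ x₀ := by
        intro h
        apply h0'
        have : f x₀ / d = 0 := by
          have := h ▸ hx₁_def
          linarith [sub_eq_self.mp this.symm]
        exact (div_eq_zero_iff.mp this).resolve_right hdne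
      -- show f x₁ * f x₀ ≤ 0 via MVT
      have hsign : f x₁ * f x₀ ≤ 0 := by
        rcases lt_or_gt_of_ne hne with hlt | hgt
        · obtain ⟨ξ, hξ, he⟩ := mvt x₁ hx₁ x₀ hx₀ hlt
          have hξab : ξ ∈ Set.Icc a b :=
            ⟨hx₁.1.trans hξ.1.le, hξ.2.le.trans hx₀.2⟩
          have h1 := hkey ξ hξab
          have hx0x1 : x₀ - x₁ = f x₀ / d := by rw [hx₁_def]; ring
          rw [hx0x1] at he
          have hfx1 : f x₁ = f x₀ * (1 - f' ξ / d) := by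
            field_simp at he ⊢; linarith
          rw [hfx1]
          nlinarith [sq_nonneg (f x₀)]
        · obtain ⟨ξ, hξ, he⟩ := mvt x₀ hx₀ x₁ hx₁ hgt
          have hξab : ξ ∈ Set.Icc a b :=
            ⟨hx₀.1.trans hξ.1.le, hξ.2.le.trans hx₁.2⟩
          have h1 := hkey ξ hξab
          have hx1x0 : x₁ - x₀ = -(f x₀ / d) := by rw [hx₁_def]; ring
          rw [hx1x0] at he
          have hfx1 : f x₁ = f x₀ * (1 - f' ξ / d) := by
            field_simp at he ⊢; linarith
          rw [hfx1]
          nlinarith [sq_nonneg (f x₀)]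
      -- IVT
      have hsub : Set.uIcc x₀ x₁ ⊆ Set.Icc a b := Set.uIcc_subset_Icc hx₀ hx₁
      have hivt := intermediate_value_uIcc (hcf.mono hsub)
      have h0mem : (0 : ℝ) ∈ Set.uIcc (f x₀) (f x₁) := by
        rcases le_or_gt (f x₀) 0 with h | h
        · have : 0 ≤ f x₁ := by nlinarith [hsign, lt_of_le_of_ne h h0']
          exact Set.mem_uIcc.mpr (Or.inl ⟨h, this⟩)
        · have : f x₁ ≤ 0 := by nlinarith
          exact Set.mem_uIcc.mpr (Or.inr ⟨this, h.le⟩)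
      obtain ⟨c, hc, hfc⟩ := hivt h0mem
      exact ⟨c, hsub hc, hfc⟩
  -- uniqueness
  obtain ⟨c, hc, hfc⟩ := hex
  refine ⟨c, ⟨hc, hfc⟩, ?_⟩
  rintro y ⟨hy, hfy⟩
  by_contra hne
  have key : ∀ u ∈ Set.Icc a b, ∀ v ∈ Set.Icc a b, u < v → f u = 0 → f v = 0 → False := by
    intro u hu v hv huv hfu hfv
    obtain ⟨ξ, hξ, he⟩ := mvt u hu v hv huv
    have hξab : ξ ∈ Set.Icc a b := ⟨hu.1.trans hξ.1.le, hξ.2.le.trans hv.2⟩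
    have : f' ξ = 0 := by
      have hvu : v - u ≠ 0 := sub_ne_zero.mpr huv.ne'
      have : f' ξ * (v - u) = 0 := by rw [← he, hfu, hfv]; ring
      exact (mul_eq_zero.mp this).resolve_right hvu
    exact h0 (this ▸ hbound ξ hξab)
  rcases lt_or_gt_of_ne hne with h | h
  · exact key y hy c hc h hfy hfc
  · exact key c hc y hy h hfc hfy
end

section
/- (Interval Newton, enclosure of zeros) Let a < b and let f : ℝ → ℝ be continuously differentiable on [a,b]. Suppose there are real numbers m ≤ M with 0 ∉ [m, M] and f′(x) ∈ [m, M] for all x ∈ [a,b]. Let x₀ ∈ [a,b] and define N(x₀, [a,b]) = { x₀ − f(x₀)/d : d ∈ [m, M] }. If x₁ ∈ [a,b] and f(x₁) = 0, then x₁ ∈ N(x₀, [a,b]). -/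
/-- Interval Newton method (Moore), part 3: enclosure of zeros. Every zero of `f` in
`[a,b]` belongs to the interval Newton operator
`N(x₀,[a,b]) = {x₀ - f(x₀)/d : d ∈ [m,M]}`. -/
theorem interval_newton_encloses_zeros (a b : ℝ) (hab : a < b) (f f' : ℝ → ℝ)
    (hderiv : ∀ x ∈ Set.Icc a b, HasDerivWithinAt f (f' x) (Set.Icc a b) x)
    (hcont : ContinuousOn f' (Set.Icc a b))
    (m M : ℝ) (hmM : m ≤ M) (h0 : (0 : ℝ) ∉ Set.Icc m M)
    (hbound : ∀ x ∈ Set.Icc a b, f' x ∈ Set.Icc m M)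
    (x₀ : ℝ) (hx₀ : x₀ ∈ Set.Icc a b)
    (x₁ : ℝ) (hx₁ : x₁ ∈ Set.Icc a b) (hz : f x₁ = 0) :
    x₁ ∈ {x : ℝ | ∃ d ∈ Set.Icc m M, x = x₀ - f x₀ / d} := by
  have hfc : ContinuousOn f (Set.Icc a b) := fun x hx =>
    (hderiv x hx).continuousWithinAt
  have hm0 : m ≠ 0 ∨ True := Or.inr trivial
  rcases eq_or_ne x₁ x₀ with h | h
  · -- zero case: f x₀ = 0
    have hm : m ∈ Set.Icc m M := ⟨le_refl m, hmM⟩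
    refine ⟨m, hm, ?_⟩
    have : f x₀ = 0 := h ▸ hz
    simp [this, h]
  · -- MVT between min and max of x₀, x₁
    have key : ∀ u v : ℝ, u < v → u ∈ Set.Icc a b → v ∈ Set.Icc a b →
        ∃ c ∈ Set.Icc a b, f v - f u = f' c * (v - u) := by
      intro u v huv hu hv
      have hsub : Set.Icc u v ⊆ Set.Icc a b := Set.Icc_subset_Icc hu.1 hv.2
      have hIoo : ∀ x ∈ Set.Ioo u v, HasDerivAt f (f' x) x := by
        intro x hx
        have hxab : x ∈ Set.Icc a b := hsub ⟨hx.1.le, hx.2.le⟩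
        refine (hderiv x hxab).hasDerivAt ?_
        exact Filter.mem_of_superset (Ioo_mem_nhds (lt_of_le_of_lt hu.1 hx.1)
          (lt_of_lt_of_le hx.2 hv.2)) Set.Ioo_subset_Icc_self
      obtain ⟨c, hc, hceq⟩ := exists_hasDerivAt_eq_slope f f' huv (hfc.mono hsub) hIoo
      refine ⟨c, hsub (Set.Ioo_subset_Icc_self hc), ?_⟩
      rw [hceq, div_mul_eq_mul_div, mul_div_assoc,
        div_self (sub_ne_zero.2 huv.ne'), mul_one]
    have hd0 : ∀ d ∈ Set.Icc m M, d ≠ 0 := fun d hd h0' => h0 (h0' ▸ hd)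
    rcases lt_or_gt_of_ne h with hlt | hlt
    · obtain ⟨c, hc, heq⟩ := key x₁ x₀ hlt hx₁ hx₀
      have hdm := hbound c hc
      refine ⟨f' c, hdm, ?_⟩
      have hne := hd0 _ hdm
      rw [hz] at heq
      field_simp
      linarith
    · obtain ⟨c, hc, heq⟩ := key x₀ x₁ hlt hx₀ hx₁
      have hdm := hbound c hc
      refine ⟨f' c, hdm, ?_⟩
      have hne := hd0 _ hdm
      rw [hz] at heq
      field_simp
      linarith
end

section
/- (Interval Newton, nonexistence test) Let a < b and let f : ℝ → ℝ be continuously differentiable on [a,b]. Suppose there are real numbers m ≤ M with 0 ∉ [m, M] and f′(x) ∈ [m, M] for all x ∈ [a,b]. Let x₀ ∈ [a,b] and define N(x₀, [a,b]) = { x₀ − f(x₀)/d : d ∈ [m, M] }. If N(x₀, [a,b]) ∩ [a,b] = ∅, then f(x) ≠ 0 for all x ∈ [a,b]. -/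
open Set

/-- The interval Newton operator `N(x₀, X) = x₀ - f(x₀) / [m, M]`, with `[m, M]` the
enclosure of `f'` over `X`. -/
def intervalNewton (f : ℝ → ℝ) (x₀ m M : ℝ) : Set ℝ :=
  {x | ∃ d ∈ Icc m M, x = x₀ - f x₀ / d}

theorem Set.OrdConnected.exists_sub_eq_mul_sub_of_le {f f' : ℝ → ℝ} {s : Set ℝ}
    (hs : s.OrdConnected) (hf : ∀ y ∈ s, HasDerivWithinAt f (f' y) s y)
    {x y : ℝ} (hx : x ∈ s) (hy : y ∈ s) (hxy : x ≤ y) :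
    ∃ c ∈ s, f y - f x = f' c * (y - x) := by
  rcases hxy.eq_or_lt with rfl | hlt
  · exact ⟨x, hx, by simp⟩
  have hsub : Icc x y ⊆ s := hs.out hx hy
  obtain ⟨c, hc, hslope⟩ := exists_hasDerivAt_eq_slope f f' hlt
    (fun z hz => (hf z (hsub hz)).continuousWithinAt.mono hsub)
    (fun z hz => (hf z (hsub (Ioo_subset_Icc_self hz))).hasDerivAt
      (Filter.mem_of_superset (Ioo_mem_nhds hz.1 hz.2) (Ioo_subset_Icc_self.trans hsub)))
  refine ⟨c, hsub (Ioo_subset_Icc_self hc), ?_⟩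
  rw [hslope, div_mul_cancel₀ _ (sub_ne_zero.2 hlt.ne')]

theorem Set.OrdConnected.exists_sub_eq_mul_sub {f f' : ℝ → ℝ} {s : Set ℝ}
    (hs : s.OrdConnected) (hf : ∀ y ∈ s, HasDerivWithinAt f (f' y) s y)
    {x y : ℝ} (hx : x ∈ s) (hy : y ∈ s) :
    ∃ c ∈ s, f y - f x = f' c * (y - x) := by
  rcases le_total x y with hxy | hyx
  · exact hs.exists_sub_eq_mul_sub_of_le hf hx hy hxy
  · obtain ⟨c, hc, hmvt⟩ := hs.exists_sub_eq_mul_sub_of_le hf hy hx hyx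
    exact ⟨c, hc, by linarith⟩

/-- By the mean value theorem `0 = f x₀ + f' c * (x - x₀)` for some `c ∈ s`, so `x` is the
Newton step from `x₀` with slope `f' c ∈ [m, M]`. -/
theorem mem_intervalNewton_of_eq_zero {f f' : ℝ → ℝ} {s : Set ℝ}
    (hs : s.OrdConnected) (hf : ∀ y ∈ s, HasDerivWithinAt f (f' y) s y)
    {m M : ℝ} (h0 : (0 : ℝ) ∉ Icc m M) (hbound : ∀ y ∈ s, f' y ∈ Icc m M)
    {x₀ x : ℝ} (hx₀ : x₀ ∈ s) (hx : x ∈ s) (hfx : f x = 0) :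
    x ∈ intervalNewton f x₀ m M := by
  obtain ⟨c, hc, hmvt⟩ := hs.exists_sub_eq_mul_sub hf hx₀ hx
  have hd : f' c ∈ Icc m M := hbound c hc
  have hd0 : f' c ≠ 0 := fun h => h0 (h ▸ hd)
  refine ⟨f' c, hd, ?_⟩
  rw [hfx] at hmvt
  field_simp
  linarith

theorem interval_newton_no_zero_general (a b : ℝ) (f f' : ℝ → ℝ)
    (hderiv : ∀ x ∈ Set.Icc a b, HasDerivWithinAt f (f' x) (Set.Icc a b) x)
    (m M : ℝ) (h0 : (0 : ℝ) ∉ Set.Icc m M)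
    (hbound : ∀ x ∈ Set.Icc a b, f' x ∈ Set.Icc m M)
    (x₀ : ℝ) (hx₀ : x₀ ∈ Set.Icc a b)
    (hN : {x : ℝ | ∃ d ∈ Set.Icc m M, x = x₀ - f x₀ / d} ∩ Set.Icc a b = ∅) :
    ∀ x ∈ Set.Icc a b, f x ≠ 0 := by
  intro x hx hfx
  have hxN : x ∈ intervalNewton f x₀ m M :=
    mem_intervalNewton_of_eq_zero ordConnected_Icc hderiv h0 hbound hx₀ hx hfx
  exact (Set.eq_empty_iff_forall_notMem.1 hN) x ⟨hxN, hx⟩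

/-- Interval Newton method (Moore), part 4: nonexistence test. If the interval Newton
operator `N(x₀,[a,b]) = {x₀ - f(x₀)/d : d ∈ [m,M]}` is disjoint from `[a,b]`, then `f`
has no zero in `[a,b]`. -/
theorem interval_newton_no_zero (a b : ℝ) (hab : a < b) (f f' : ℝ → ℝ)
    (hderiv : ∀ x ∈ Set.Icc a b, HasDerivWithinAt f (f' x) (Set.Icc a b) x)
    (hcont : ContinuousOn f' (Set.Icc a b))
    (m M : ℝ) (hmM : m ≤ M) (h0 : (0 : ℝ) ∉ Set.Icc m M)
    (hbound : ∀ x ∈ Set.Icc a b, f' x ∈ Set.Icc m M)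
    (x₀ : ℝ) (hx₀ : x₀ ∈ Set.Icc a b)
    (hN : {x : ℝ | ∃ d ∈ Set.Icc m M, x = x₀ - f x₀ / d} ∩ Set.Icc a b = ∅) :
    ∀ x ∈ Set.Icc a b, f x ≠ 0 :=
  interval_newton_no_zero_general a b f f' hderiv m M h0 hbound x₀ hx₀ hN
end

section
/- Let a < b, ε > 0, and f : [a,b] → ℝ. Suppose [a,b] = I₁ ∪ … ∪ Iₙ where each Iᵢ is a nonempty closed interval contained in [a,b], and for each i there is a closed interval Jᵢ = [cᵢ, dᵢ] with f(Iᵢ) ⊆ Jᵢ and dᵢ − cᵢ ≤ ε. Let S = [min_i cᵢ, max_i dᵢ] be the smallest closed interval containing J₁ ∪ … ∪ Jₙ. Then f is bounded on [a,b], f([a,b]) ⊆ S, and S ⊆ [inf_{x ∈ [a,b]} f(x) − ε, sup_{x ∈ [a,b]} f(x) + ε]. -/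
/-- Correctness of the binary subdivision algorithm for range evaluation: if `[a,b]` is a
finite union of nonempty closed intervals `Iᵢ ⊆ [a,b]` and on each `Iᵢ` the values of `f`
are enclosed in an interval `Jᵢ = [cᵢ, dᵢ]` of diameter at most `ε`, then `f` is bounded
on `[a,b]`, its range on `[a,b]` is contained in the hull `S = [min cᵢ, max dᵢ]` of the
`Jᵢ`, and `S` over-approximates the range by at most `ε` on each side. -/
theorem BSA_correct (a b ε : ℝ) (hab : a < b) (hε : 0 < ε) (f : ℝ → ℝ)
    (n : ℕ) (hn : 0 < n) (l r c d : Fin n → ℝ)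
    (hlr : ∀ i, l i ≤ r i)
    (hsub : ∀ i, Set.Icc (l i) (r i) ⊆ Set.Icc a b)
    (hcov : Set.Icc a b = ⋃ i, Set.Icc (l i) (r i))
    (hencl : ∀ i, f '' Set.Icc (l i) (r i) ⊆ Set.Icc (c i) (d i))
    (hdiam : ∀ i, d i - c i ≤ ε) :
    (∃ C : ℝ, ∀ x ∈ Set.Icc a b, |f x| ≤ C) ∧
    f '' Set.Icc a b ⊆ Set.Icc (⨅ i, c i) (⨆ i, d i) ∧
    Set.Icc (⨅ i, c i) (⨆ i, d i) ⊆
      Set.Icc (sInf (f '' Set.Icc a b) - ε) (sSup (f '' Set.Icc a b) + ε) := by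
  haveI : Nonempty (Fin n) := ⟨⟨0, hn⟩⟩
  set cmin := ⨅ i, c i with hcmin
  set dmax := ⨆ i, d i with hdmax
  -- every point of [a,b] has f x in [cmin, dmax]
  have key : ∀ x ∈ Set.Icc a b, cmin ≤ f x ∧ f x ≤ dmax := by
    intro x hx
    rw [hcov] at hx
    obtain ⟨i, hi⟩ := Set.mem_iUnion.mp hx
    have hfx := hencl i ⟨x, hi, rfl⟩
    exact ⟨le_trans (ciInf_le (Set.Finite.bddBelow (Set.finite_range c)) i) hfx.1,
      le_trans hfx.2 (le_ciSup (Set.Finite.bddAbove (Set.finite_range d)) i)⟩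
  have himg : f '' Set.Icc a b ⊆ Set.Icc cmin dmax := by
    rintro _ ⟨x, hx, rfl⟩
    exact key x hx
  have hne : (f '' Set.Icc a b).Nonempty :=
    ⟨f a, ⟨a, ⟨le_refl a, le_of_lt hab⟩, rfl⟩⟩
  have hbdd : BddBelow (f '' Set.Icc a b) ∧ BddAbove (f '' Set.Icc a b) := by
    constructor
    · exact ⟨cmin, fun y hy => (himg hy).1⟩
    · exact ⟨dmax, fun y hy => (himg hy).2⟩
  refine ⟨⟨max |cmin| |dmax|, fun x hx => ?_⟩, himg, ?_⟩
  · obtain ⟨h1, h2⟩ := key x hx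
    rw [abs_le]
    constructor
    · calc -(max |cmin| |dmax|) ≤ -|cmin| := by simp [le_max_left]
        _ ≤ cmin := neg_abs_le _
        _ ≤ f x := h1
    · exact le_trans h2 (le_trans (le_abs_self _) (le_max_right _ _))
  · -- endpoints
    obtain ⟨i₀, hi₀⟩ := Finite.exists_min c
    obtain ⟨i₁, hi₁⟩ := Finite.exists_max d
    have hcmin_eq : cmin = c i₀ :=
      le_antisymm (ciInf_le (Set.Finite.bddBelow (Set.finite_range c)) i₀)
        (le_ciInf hi₀)
    have hdmax_eq : dmax = d i₁ :=
      le_antisymm (ciSup_le hi₁) (le_ciSup (Set.Finite.bddAbove (Set.finite_range d)) i₁)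
    -- witness points
    have hx₀ : l i₀ ∈ Set.Icc a b := hsub i₀ ⟨le_refl _, hlr i₀⟩
    have hx₁ : l i₁ ∈ Set.Icc a b := hsub i₁ ⟨le_refl _, hlr i₁⟩
    have hf₀ := hencl i₀ ⟨l i₀, ⟨le_refl _, hlr i₀⟩, rfl⟩
    have hf₁ := hencl i₁ ⟨l i₁, ⟨le_refl _, hlr i₁⟩, rfl⟩
    apply Set.Icc_subset_Icc
    · have h1 : sInf (f '' Set.Icc a b) ≤ f (l i₀) :=
        csInf_le hbdd.1 ⟨l i₀, hx₀, rfl⟩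
      have h2 : f (l i₀) ≤ c i₀ + ε := by linarith [hf₀.2, hdiam i₀]
      linarith [hcmin_eq ▸ (le_trans h1 h2)]
    · have h1 : f (l i₁) ≤ sSup (f '' Set.Icc a b) :=
        le_csSup hbdd.2 ⟨l i₁, hx₁, rfl⟩
      have h2 : d i₁ - ε ≤ f (l i₁) := by linarith [hf₁.1, hdiam i₁]
      rw [hdmax_eq]
      linarith
end

section
/- For every real h ≥ 0, with the set S_h = { Σ_{k=0}^{∞} (−1)^k x_k^k / k! : x : ℕ → [0,h] } (with the convention 0⁰ = 1, each such series being absolutely convergent): cosh h ∈ S_h and 1 − sinh h ∈ S_h, so that sup S_h − inf S_h ≥ cosh h + sinh h − 1 = e^h − 1; moreover (e^h − 1) − (1 − e^{−h}) = e^h + e^{−h} − 2 ≥ h². In particular, the diameter e^h − 1 of the naive term-by-term interval evaluation of the series for e^{−x} on [0,h] exceeds the diameter 1 − e^{−h} of the true range { e^{−x} : x ∈ [0,h] } by at least h². -/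
open Real
set_option maxHeartbeats 1000000

private lemma abs_term (x : ℝ) (hx : 0 ≤ x) (k : ℕ) :
    |(-1 : ℝ) ^ k * x ^ k / (Nat.factorial k)| = x ^ k / (Nat.factorial k) := by
  rw [abs_div, abs_mul, abs_pow, abs_pow, abs_neg, abs_one, one_pow, one_mul,
    abs_of_nonneg hx, abs_of_nonneg (by positivity : (0:ℝ) ≤ (Nat.factorial k : ℝ))]

private lemma summable_abs_aux (h : ℝ) (x : ℕ → ℝ) (hx : ∀ k, x k ∈ Set.Icc 0 h) :
    Summable (fun k : ℕ => |(-1 : ℝ) ^ k * (x k) ^ k / (Nat.factorial k)|) := by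
  apply Summable.of_nonneg_of_le (fun k => abs_nonneg _)
    (fun k => ?_) (Real.summable_pow_div_factorial h)
  rw [abs_term (x k) (hx k).1]
  exact div_le_div_of_nonneg_right (pow_le_pow_left₀ (hx k).1 (hx k).2 k) (by positivity)

private lemma cosh_mem (h : ℝ) (hh : 0 ≤ h) :
    Real.cosh h = ∑' k : ℕ, (-1 : ℝ) ^ k *
      ((fun k => if Even k then h else 0) k) ^ k / (Nat.factorial k) := by
  set x : ℕ → ℝ := fun k => if Even k then h else 0 with hxdef
  have he : (fun k : ℕ => (-1 : ℝ) ^ (2 * k) * (x (2 * k)) ^ (2 * k) /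
      (Nat.factorial (2 * k))) = fun k => h ^ (2 * k) / (Nat.factorial (2 * k)) := by
    funext k
    simp [hxdef, pow_mul, even_two_mul k]
  have ho : (fun k : ℕ => (-1 : ℝ) ^ (2 * k + 1) * (x (2 * k + 1)) ^ (2 * k + 1) /
      (Nat.factorial (2 * k + 1))) = fun _ => (0:ℝ) := by
    funext k
    have : ¬ Even (2 * k + 1) := by simp [Nat.even_add_one, Nat.even_iff]
    simp [hxdef, this]
  have hev : HasSum (fun k : ℕ => (-1 : ℝ) ^ (2 * k) * (x (2 * k)) ^ (2 * k) /
      (Nat.factorial (2 * k))) (Real.cosh h) := by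
    rw [he]; exact Real.hasSum_cosh h
  have hod : HasSum (fun k : ℕ => (-1 : ℝ) ^ (2 * k + 1) * (x (2 * k + 1)) ^ (2 * k + 1) /
      (Nat.factorial (2 * k + 1))) 0 := by
    rw [ho]; exact hasSum_zero
  have key := (HasSum.even_add_odd (f := fun k : ℕ => (-1 : ℝ) ^ k * (x k) ^ k / (Nat.factorial k)) hev hod).tsum_eq
  rw [key]; ring

private lemma sinh_mem (h : ℝ) (hh : 0 ≤ h) :
    1 - Real.sinh h = ∑' k : ℕ, (-1 : ℝ) ^ k *
      ((fun k => if Even k then 0 else h) k) ^ k / (Nat.factorial k) := by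
  set x : ℕ → ℝ := fun k => if Even k then 0 else h with hxdef
  have he : (fun k : ℕ => (-1 : ℝ) ^ (2 * k) * (x (2 * k)) ^ (2 * k) /
      (Nat.factorial (2 * k))) = fun k => if k = 0 then (1:ℝ) else 0 := by
    funext k
    match k with
    | 0 => simp [hxdef]
    | (n+1) =>
      have hx0 : x (2 * (n + 1)) = 0 := by simp [hxdef, even_two_mul (n+1)]
      rw [hx0, zero_pow (by omega)]
      simp
  have ho : (fun k : ℕ => (-1 : ℝ) ^ (2 * k + 1) * (x (2 * k + 1)) ^ (2 * k + 1) /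
      (Nat.factorial (2 * k + 1))) = fun k => -(h ^ (2 * k + 1) / (Nat.factorial (2 * k + 1))) := by
    funext k
    have hodd : ¬ Even (2 * k + 1) := by simp [Nat.even_add_one, Nat.even_iff]
    simp only [hxdef, hodd, if_false]
    rw [pow_succ, pow_succ, pow_mul, pow_mul]
    norm_num
    ring
  have hev : HasSum (fun k : ℕ => (-1 : ℝ) ^ (2 * k) * (x (2 * k)) ^ (2 * k) /
      (Nat.factorial (2 * k))) 1 := by
    rw [he]; exact hasSum_ite_eq 0 1
  have hod : HasSum (fun k : ℕ => (-1 : ℝ) ^ (2 * k + 1) * (x (2 * k + 1)) ^ (2 * k + 1) /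
      (Nat.factorial (2 * k + 1))) (-(Real.sinh h)) := by
    rw [ho]; exact (Real.hasSum_sinh h).neg
  have key := (HasSum.even_add_odd (f := fun k : ℕ => (-1 : ℝ) ^ k * (x k) ^ k / (Nat.factorial k)) hev hod).tsum_eq
  rw [key]; ring

/-- The dependency problem for naive interval summation of the series of `e^{-x}` on
`[0,h]`: with `S_h` the set of sums `Σ (-1)^k x_k^k / k!` over all choices `x_k ∈ [0,h]`,
every such series is absolutely convergent, `cosh h ∈ S_h` and `1 - sinh h ∈ S_h`, so the
diameter of `S_h` is at least `cosh h + sinh h - 1 = e^h - 1`, which exceeds the diameter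
`1 - e^{-h}` of the true range of `e^{-x}` on `[0,h]` by at least `h²`. -/
theorem naive_interval_exp_overestimation (h : ℝ) (hh : 0 ≤ h) :
    (∀ x : ℕ → ℝ, (∀ k, x k ∈ Set.Icc 0 h) →
      Summable (fun k : ℕ => |(-1 : ℝ) ^ k * (x k) ^ k / (Nat.factorial k)|)) ∧
    Real.cosh h ∈
      {y : ℝ | ∃ x : ℕ → ℝ, (∀ k, x k ∈ Set.Icc 0 h) ∧
        y = ∑' k : ℕ, (-1 : ℝ) ^ k * (x k) ^ k / (Nat.factorial k)} ∧
    (1 - Real.sinh h) ∈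
      {y : ℝ | ∃ x : ℕ → ℝ, (∀ k, x k ∈ Set.Icc 0 h) ∧
        y = ∑' k : ℕ, (-1 : ℝ) ^ k * (x k) ^ k / (Nat.factorial k)} ∧
    Real.cosh h + Real.sinh h - 1 = Real.exp h - 1 ∧
    Real.exp h - 1 ≤
      sSup {y : ℝ | ∃ x : ℕ → ℝ, (∀ k, x k ∈ Set.Icc 0 h) ∧
          y = ∑' k : ℕ, (-1 : ℝ) ^ k * (x k) ^ k / (Nat.factorial k)} -
        sInf {y : ℝ | ∃ x : ℕ → ℝ, (∀ k, x k ∈ Set.Icc 0 h) ∧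
          y = ∑' k : ℕ, (-1 : ℝ) ^ k * (x k) ^ k / (Nat.factorial k)} ∧
    h ^ 2 ≤ (Real.exp h - 1) - (1 - Real.exp (-h)) := by
  have hsum : ∀ x : ℕ → ℝ, (∀ k, x k ∈ Set.Icc 0 h) →
      Summable (fun k : ℕ => |(-1 : ℝ) ^ k * (x k) ^ k / (Nat.factorial k)|) :=
    fun x hx => summable_abs_aux h x hx
  have hc : Real.cosh h ∈
      {y : ℝ | ∃ x : ℕ → ℝ, (∀ k, x k ∈ Set.Icc 0 h) ∧
        y = ∑' k : ℕ, (-1 : ℝ) ^ k * (x k) ^ k / (Nat.factorial k)} := by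
    refine ⟨fun k => if Even k then h else 0, fun k => ?_, cosh_mem h hh⟩
    by_cases hk : Even k <;> simp [hk, hh]
  have hsnh : (1 - Real.sinh h) ∈
      {y : ℝ | ∃ x : ℕ → ℝ, (∀ k, x k ∈ Set.Icc 0 h) ∧
        y = ∑' k : ℕ, (-1 : ℝ) ^ k * (x k) ^ k / (Nat.factorial k)} := by
    refine ⟨fun k => if Even k then 0 else h, fun k => ?_, sinh_mem h hh⟩
    by_cases hk : Even k <;> simp [hk, hh]
  set S := {y : ℝ | ∃ x : ℕ → ℝ, (∀ k, x k ∈ Set.Icc 0 h) ∧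
      y = ∑' k : ℕ, (-1 : ℝ) ^ k * (x k) ^ k / (Nat.factorial k)} with hS
  set M : ℝ := ∑' k : ℕ, h ^ k / (Nat.factorial k) with hM
  have hbound : ∀ y ∈ S, |y| ≤ M := by
    rintro y ⟨x, hx, rfl⟩
    calc |∑' k : ℕ, (-1 : ℝ) ^ k * (x k) ^ k / (Nat.factorial k)|
        ≤ ∑' k : ℕ, |(-1 : ℝ) ^ k * (x k) ^ k / (Nat.factorial k)| := by
          have habs : (fun k : ℕ => ‖(-1 : ℝ) ^ k * (x k) ^ k / (Nat.factorial k)‖)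
              = fun k : ℕ => |(-1 : ℝ) ^ k * (x k) ^ k / (Nat.factorial k)| :=
            funext fun k => Real.norm_eq_abs _
          have hn : Summable fun k : ℕ => ‖(-1 : ℝ) ^ k * (x k) ^ k / (Nat.factorial k)‖ := by
            rw [habs]; exact hsum x hx
          have hle := norm_tsum_le_tsum_norm hn
          rw [habs, Real.norm_eq_abs] at hle
          exact hle
      _ ≤ M := by
          apply Summable.tsum_le_tsum _ (hsum x hx) (Real.summable_pow_div_factorial h)
          intro k
          rw [abs_term (x k) (hx k).1]
          exact div_le_div_of_nonneg_right (pow_le_pow_left₀ (hx k).1 (hx k).2 k)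
            (by positivity)
  have hbdda : BddAbove S := ⟨M, fun y hy => (abs_le.mp (hbound y hy)).2⟩
  have hbddb : BddBelow S := ⟨-M, fun y hy => (abs_le.mp (hbound y hy)).1⟩
  have h1 : Real.cosh h ≤ sSup S := le_csSup hbdda hc
  have h2 : sInf S ≤ 1 - Real.sinh h := csInf_le hbddb hsnh
  have h3 : Real.cosh h + Real.sinh h = Real.exp h := Real.cosh_add_sinh h
  have hq : h ^ 2 ≤ (Real.exp h - 1) - (1 - Real.exp (-h)) := by
    have hcosh : 1 + h ^ 2 / 2 ≤ Real.cosh h := by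
      have hsum2 := (Real.hasSum_cosh h).summable
      have hle := Summable.sum_le_tsum (Finset.range 2) (fun n _ => by positivity) hsum2
      rw [Real.cosh_eq_tsum]
      calc 1 + h ^ 2 / 2
          = ∑ n ∈ Finset.range 2, h ^ (2 * n) / ((Nat.factorial (2 * n) : ℝ)) := by
            norm_num [Finset.sum_range_succ]
        _ ≤ _ := hle
    have := Real.cosh_eq h
    nlinarith [hcosh]
  exact ⟨hsum, hc, hsnh, by linarith, by linarith, hq⟩
end
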